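/- arXiv:2502.11009 — 5 statements merged into one kernel-verified Lean document; each statement's English description precedes it below -/
import Mathlib

section
/- The number of maximal independent sets of a graph on n ≥ 2 vertices is at most 3^{n/3} if n ≡ 0 mod 3, at most 4·3^{⌊n/3⌋−1} if n ≡ 1 mod 3, and at most 2·3^{⌊n/3⌋} if n ≡ 2 mod 3. -/
/-- `s` is a maximal independent set of `G`. -/
def IsMaxIndepSet {V : Type*} (G : SimpleGraph V) (s : Set V) : Prop :=
  (s.Pairwise fun u v => ¬ G.Adj u v) ∧
    ∀ t : Set V, (t.Pairwise fun u v => ¬ G.Adj u v) → s ⊆ t → s = t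

namespace MoonMoser

def t : ℕ → ℕ
  | 0 => 1
  | 1 => 1
  | 2 => 2
  | 3 => 3
  | 4 => 4
  | (n+5) => 3 * t (n+2)

lemma t_succ : ∀ m, t m ≤ t (m + 1) := by
  intro m
  induction m using t.induct with
  | case1 | case2 | case3 | case4 | case5 => simp [t]
  | case6 n ih =>
    show t (n+5) ≤ t (n+5+1)
    have h1 : t (n+5) = 3 * t (n+2) := rfl
    have h2 : t (n+5+1) = 3 * t (n+2+1) := rfl
    omega

lemma t_mono : Monotone t := monotone_nat_of_le_succ t_succ

lemma t2 : ∀ m, 2 * t m ≤ t (m + 2) := by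
  intro m
  induction m using t.induct with
  | case1 | case2 | case3 | case4 | case5 => simp [t]
  | case6 n ih =>
    show 2 * t (n+5) ≤ t (n+5+2)
    have h1 : t (n+5) = 3 * t (n+2) := rfl
    have h2 : t (n+5+2) = 3 * t (n+2+2) := rfl
    omega

lemma t3 : ∀ m, 3 * t m ≤ t (m + 3) := by
  intro m
  induction m using t.induct with
  | case1 | case2 | case3 | case4 | case5 => simp [t]
  | case6 n ih =>
    show 3 * t (n+5) ≤ t (n+5+3)
    have h1 : t (n+5) = 3 * t (n+2) := rfl
    have h2 : t (n+5+3) = 3 * t (n+2+3) := rfl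
    omega

lemma t4 : ∀ m, 4 * t m ≤ t (m + 4) := by
  intro m
  induction m using t.induct with
  | case1 | case2 | case3 | case4 | case5 => simp [t]
  | case6 n ih =>
    show 4 * t (n+5) ≤ t (n+5+4)
    have h1 : t (n+5) = 3 * t (n+2) := rfl
    have h2 : t (n+5+4) = 3 * t (n+2+4) := rfl
    omega

lemma t_key : ∀ k m, 1 ≤ k → k * t m ≤ t (m + k) := by
  intro k
  induction k using Nat.strong_induction_on with
  | _ k IH =>
    intro m hk
    match k, hk with
    | 1, _ => simpa using t_succ m
    | 2, _ => exact t2 m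
    | 3, _ => exact t3 m
    | 4, _ => exact t4 m
    | (j+5), _ =>
      have h1 : (j+2) * t m ≤ t (m + (j+2)) := IH (j+2) (by omega) m (by omega)
      calc (j+5) * t m ≤ 3 * ((j+2) * t m) := by
            have := Nat.zero_le (t m); nlinarith
        _ ≤ 3 * t (m + (j+2)) := by omega
        _ ≤ t (m + (j+2) + 3) := t3 _
        _ = t (m + (j+5)) := congrArg t (by omega)

lemma t_vals : ∀ m, t (3*m+2) = 2 * 3^m ∧ t (3*m+3) = 3^(m+1) ∧ t (3*m+4) = 4 * 3^m := by
  intro m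
  induction m with
  | zero => simp [t]
  | succ m ih =>
    obtain ⟨h2, h3, h4⟩ := ih
    refine ⟨?_, ?_, ?_⟩
    · rw [show 3*(m+1)+2 = (3*m)+5 from by ring, t, h2]; ring
    · rw [show 3*(m+1)+3 = (3*m+1)+5 from by ring, t,
        show (3*m+1)+2 = 3*m+3 from by ring, h3]; ring
    · rw [show 3*(m+1)+4 = (3*m+2)+5 from by ring, t,
        show (3*m+2)+2 = 3*m+4 from by ring, h4]; ring

lemma ncard_biUnion_le {ι α : Type*} (A : Finset ι) (f : ι → Set α)
    (hfin : ∀ i, (f i).Finite) :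
    (⋃ i ∈ A, f i).ncard ≤ ∑ i ∈ A, (f i).ncard := by
  classical
  induction A using Finset.induction_on with
  | empty => simp
  | @insert a A ha ih =>
    rw [Finset.set_biUnion_insert, Finset.sum_insert ha]
    exact le_trans (Set.ncard_union_le _ _) (Nat.add_le_add_left ih _)

universe u

lemma main : ∀ (n : ℕ) (V : Type u) [Fintype V] (G : SimpleGraph V),
    Fintype.card V = n → {s : Set V | IsMaxIndepSet G s}.ncard ≤ t n := by
  intro n
  induction n using Nat.strong_induction_on with
  | _ n IH =>
  intro V _ G hV
  classical
  cases isEmpty_or_nonempty V with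
  | inl hE =>
    have h0 : n = 0 := by rw [← hV]; exact Fintype.card_eq_zero
    subst h0
    have hsub : {s : Set V | IsMaxIndepSet G s} ⊆ {(∅ : Set V)} := by
      intro s _
      simp [Set.eq_empty_of_isEmpty s]
    calc {s : Set V | IsMaxIndepSet G s}.ncard
        ≤ ({∅} : Set (Set V)).ncard := Set.ncard_le_ncard hsub (Set.finite_singleton _)
      _ = 1 := Set.ncard_singleton _
      _ ≤ t 0 := by simp [t]
  | inr hNe =>
    have hn1 : 1 ≤ n := by
      rw [← hV]; exact Fintype.card_pos
    obtain ⟨v, hv⟩ := G.exists_minimal_degree_vertex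
    set d := G.degree v with hd
    set M := {s : Set V | IsMaxIndepSet G s} with hM
    set Nv : Finset V := insert v (G.neighborFinset v) with hNv
    have hNvcard : Nv.card = d + 1 := by
      rw [hNv, Finset.card_insert_of_notMem (G.notMem_neighborFinset_self v),
        G.card_neighborFinset_eq_degree]
    have hdn : d < n := hV ▸ G.degree_lt_card_verts v
    -- every maximal independent set meets the closed neighborhood of v
    have cover : M ⊆ ⋃ u ∈ Nv, {s ∈ M | u ∈ s} := by
      intro s hsM
      obtain ⟨hind, hmax⟩ := hsM
      have hex : ∃ u ∈ Nv, u ∈ s := by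
        by_contra h
        push_neg at h
        have hvs : v ∉ s := h v (Finset.mem_insert_self _ _)
        have hind' : (insert v s).Pairwise fun a b => ¬ G.Adj a b := by
          refine Set.pairwise_insert.2 ⟨hind, fun b hb hne => ⟨?_, ?_⟩⟩
          · intro hadj
            exact h b (Finset.mem_insert_of_mem ((G.mem_neighborFinset v b).2 hadj)) hb
          · intro hadj
            exact h b (Finset.mem_insert_of_mem ((G.mem_neighborFinset v b).2 hadj.symm)) hb
        have heq := hmax _ hind' (Set.subset_insert _ _)
        exact hvs (heq ▸ Set.mem_insert _ _)
      obtain ⟨u, huNv, hus⟩ := hex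
      simp only [Set.mem_iUnion]
      exact ⟨u, huNv, ⟨⟨hind, hmax⟩, hus⟩⟩
    -- bound on the number of maximal independent sets containing a fixed u ∈ N[v]
    have hu_bound : ∀ u ∈ Nv, {s ∈ M | u ∈ s}.ncard ≤ t (n - 1 - d) := by
      intro u _
      set C : Set V := {x | x ≠ u ∧ ¬ G.Adj u x} with hC
      haveI : Fintype C := Fintype.ofFinite C
      -- cardinality of C
      have hCcompl : Cᶜ = insert u (G.neighborSet u) := by
        ext x
        simp only [hC, Set.mem_compl_iff, Set.mem_setOf_eq, Set.mem_insert_iff,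
          SimpleGraph.mem_neighborSet]
        tauto
      have hCcomplcard : Cᶜ.ncard = G.degree u + 1 := by
        rw [hCcompl, Set.ncard_insert_of_notMem (by simp) (Set.toFinite _)]
        congr 1
        rw [← Nat.card_coe_set_eq, Nat.card_eq_fintype_card]
        exact G.card_neighborSet_eq_degree u
      have hCcard : Fintype.card C = n - 1 - G.degree u := by
        have h1 := Set.ncard_add_ncard_compl C (Set.toFinite _) (Set.toFinite _)
        rw [hCcomplcard, Nat.card_eq_fintype_card, hV] at h1
        rw [← Nat.card_eq_fintype_card, Nat.card_coe_set_eq]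
        omega
      -- every maximal independent set containing u is recovered from its trace on C
      have hrecover : ∀ s ∈ {s ∈ M | u ∈ s},
          s = insert u (Subtype.val '' ((Subtype.val ⁻¹' s) : Set C)) := by
        intro s hs
        obtain ⟨⟨hind, _⟩, hus⟩ := hs
        apply Set.Subset.antisymm
        · intro w hw
          by_cases hwu : w = u
          · exact hwu ▸ Set.mem_insert _ _
          · have hwC : w ∈ C := ⟨hwu, hind hus hw fun h => hwu h.symm⟩
            exact Set.mem_insert_iff.2 (Or.inr ⟨⟨w, hwC⟩, hw, rfl⟩)
        · intro w hw
          rcases Set.mem_insert_iff.1 hw with rfl | ⟨x, hx, rfl⟩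
          · exact hus
          · exact hx
      -- the trace is a maximal independent set of the induced graph
      have hmaps : ∀ s ∈ {s ∈ M | u ∈ s},
          ((Subtype.val ⁻¹' s : Set C)) ∈ {s' : Set C | IsMaxIndepSet (G.induce C) s'} := by
        intro s hs
        obtain ⟨⟨hind, hmax⟩, hus⟩ := hs
        constructor
        · intro a ha b hb hab
          simp only [SimpleGraph.comap_adj, Function.Embedding.coe_subtype]
          exact hind ha hb fun h => hab (Subtype.ext h)
        · intro t' ht' hsub
          set T : Set V := insert u (Subtype.val '' t') with hT
          have hTind : T.Pairwise fun a b => ¬ G.Adj a b := by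
            intro a ha b hb hab hadj
            rcases Set.mem_insert_iff.1 ha with rfl | ⟨x, hx, rfl⟩ <;>
              rcases Set.mem_insert_iff.1 hb with rfl | ⟨y, hy, rfl⟩
            · exact hab rfl
            · exact y.2.2 hadj
            · exact x.2.2 hadj.symm
            · exact ht' hx hy (fun h => hab (congrArg Subtype.val h))
                (by simpa [SimpleGraph.comap_adj] using hadj)
          have hsT : s ⊆ T := by
            intro w hw
            by_cases hwu : w = u
            · exact hwu ▸ Set.mem_insert _ _
            · have hwC : w ∈ C := ⟨hwu, hind hus hw fun h => hwu h.symm⟩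
              have : (⟨w, hwC⟩ : C) ∈ (Subtype.val ⁻¹' s : Set C) := hw
              exact Set.mem_insert_iff.2 (Or.inr ⟨⟨w, hwC⟩, hsub this, rfl⟩)
          have hsTeq : s = T := hmax T hTind hsT
          apply Set.Subset.antisymm hsub
          intro x hx
          have hxT : (x : V) ∈ T := Set.mem_insert_iff.2 (Or.inr ⟨x, hx, rfl⟩)
          show (x : V) ∈ s
          rw [hsTeq]
          exact hxT
      -- injectivity of the trace map
      have hinj : Set.InjOn (fun s : Set V => (Subtype.val ⁻¹' s : Set C))
          {s ∈ M | u ∈ s} := by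
        intro s hs s' hs' heq
        rw [hrecover s hs, hrecover s' hs']
        simp only at heq
        rw [heq]
      have hlt : n - 1 - G.degree u < n := by omega
      calc {s ∈ M | u ∈ s}.ncard
          ≤ {s' : Set C | IsMaxIndepSet (G.induce C) s'}.ncard :=
            Set.ncard_le_ncard_of_injOn _ hmaps hinj (Set.toFinite _)
        _ ≤ t (n - 1 - G.degree u) := IH _ hlt C (G.induce C) hCcard
        _ ≤ t (n - 1 - d) := by
            apply t_mono
            have : d ≤ G.degree u := by rw [← hv]; exact G.minDegree_le_degree u
            omega
    calc M.ncard ≤ (⋃ u ∈ Nv, {s ∈ M | u ∈ s}).ncard :=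
          Set.ncard_le_ncard cover (Set.toFinite _)
      _ ≤ ∑ u ∈ Nv, {s ∈ M | u ∈ s}.ncard :=
          ncard_biUnion_le Nv _ fun i => Set.toFinite _
      _ ≤ ∑ _u ∈ Nv, t (n - 1 - d) := Finset.sum_le_sum hu_bound
      _ = (d + 1) * t (n - 1 - d) := by
          rw [Finset.sum_const, hNvcard, smul_eq_mul]
      _ ≤ t n := by
          have h := t_key (d + 1) (n - 1 - d) (by omega)
          rwa [show n - 1 - d + (d + 1) = n from by omega] at h

end MoonMoser

/-- Moon–Moser bound on the number of maximal independent sets. -/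
theorem maxIndepSets_bound {V : Type*} [Fintype V] (G : SimpleGraph V)
    (hn : 2 ≤ Fintype.card V) :
    (Fintype.card V % 3 = 0 →
      {s : Set V | IsMaxIndepSet G s}.ncard ≤ 3 ^ (Fintype.card V / 3)) ∧
    (Fintype.card V % 3 = 1 →
      {s : Set V | IsMaxIndepSet G s}.ncard ≤ 4 * 3 ^ (Fintype.card V / 3 - 1)) ∧
    (Fintype.card V % 3 = 2 →
      {s : Set V | IsMaxIndepSet G s}.ncard ≤ 2 * 3 ^ (Fintype.card V / 3)) := by
  have hmain := MoonMoser.main (Fintype.card V) V G rfl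
  refine ⟨fun h0 => ?_, fun h1 => ?_, fun h2 => ?_⟩
  · obtain ⟨m, hm⟩ : ∃ m, Fintype.card V = 3*m+3 := ⟨Fintype.card V/3 - 1, by omega⟩
    rw [hm] at hmain ⊢
    rw [(MoonMoser.t_vals m).2.1] at hmain
    rw [show (3*m+3)/3 = m + 1 from by omega]
    exact hmain
  · obtain ⟨m, hm⟩ : ∃ m, Fintype.card V = 3*m+4 := ⟨Fintype.card V/3 - 1, by omega⟩
    rw [hm] at hmain ⊢
    rw [(MoonMoser.t_vals m).2.2] at hmain
    rw [show (3*m+4)/3 - 1 = m from by omega]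
    exact hmain
  · obtain ⟨m, hm⟩ : ∃ m, Fintype.card V = 3*m+2 := ⟨Fintype.card V/3, by omega⟩
    rw [hm] at hmain ⊢
    rw [(MoonMoser.t_vals m).1] at hmain
    rw [show (3*m+2)/3 = m from by omega]
    exact hmain
end

section
/- Under a stable ordering of edges, the size of the vertex cover produced by the greedy matching algorithm changes by at most 2 when a node (and its incident edges) is removed from the graph. -/
/-!
Run the greedy algorithm on `L` and on `L` without the edges at `v` side by side. Until the
full run first picks an edge at `v` the two covers coincide; that step adds `v` and at most one
other vertex. From then on `v` stays covered, so every later edge at `v` is skipped, and the two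
runs see the same edges. The greedy step preserves "differing in at most one element": if one
cover has an extra vertex `x`, an edge that `x` alone covers is picked only by the other run,
which then gains `x` together with at most one new vertex. Hence the covers differ by `v` and
at most one further vertex, in one direction or the other, and their sizes by at most 2.
-/

/-- Greedy matching-based vertex cover: process edges in order, adding both
endpoints of each edge that is not yet covered. -/
def greedyCover {V : Type*} [DecidableEq V] (L : List (V × V)) : Finset V :=
  L.foldl (fun C e => if e.1 ∈ C ∨ e.2 ∈ C then C else insert e.1 (insert e.2 C)) ∅

theorem List.foldl_filter_of_rel {α β : Type*} (R : β → β → Prop) (p : α → Bool)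
    (f : β → α → β) (keep : ∀ a b b', p a → R b b' → R (f b a) (f b' a))
    (drop : ∀ a b b', ¬p a → R b b' → R (f b a) b') :
    ∀ (L : List α) (b b' : β), R b b' → R (L.foldl f b) ((L.filter p).foldl f b')
  | [], _, _, h => h
  | a :: L, b, b', h => by
    by_cases hp : p a
    · rw [List.filter_cons_of_pos hp]
      exact List.foldl_filter_of_rel R p f keep drop L _ _ (keep a b b' hp h)
    · rw [List.filter_cons_of_neg hp]
      exact List.foldl_filter_of_rel R p f keep drop L _ _ (drop a b b' hp h)

namespace Finset

variable {α : Type*} [DecidableEq α]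

def WithinOne (s t : Finset α) : Prop :=
  s = t ∨ (∃ x ∉ t, s = insert x t) ∨ (∃ x ∉ s, t = insert x s)

theorem WithinOne.symm {s t : Finset α} (h : WithinOne s t) : WithinOne t s := by
  rcases h with rfl | h | h
  exacts [Or.inl rfl, Or.inr (Or.inr h), Or.inr (Or.inl h)]

theorem withinOne_of_subset_of_subset_insert {s t : Finset α} {x : α} (hts : t ⊆ s)
    (hst : s ⊆ insert x t) : WithinOne s t := by
  by_cases hx : x ∈ s ∧ x ∉ t
  · exact Or.inr (Or.inl ⟨x, hx.2, hst.antisymm (insert_subset hx.1 hts)⟩)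
  · refine Or.inl (hts.antisymm' fun y hy => ?_)
    rcases mem_insert.mp (hst hy) with rfl | hyt
    exacts [not_not.mp fun h => hx ⟨hy, h⟩, hyt]

theorem withinOne_insert (x : α) (s : Finset α) : WithinOne (insert x s) s :=
  withinOne_of_subset_of_subset_insert (subset_insert x s) subset_rfl

theorem WithinOne.abs_card_sub_le {s t : Finset α} (h : WithinOne s t) :
    |(#s : ℤ) - #t| ≤ 1 := by
  rcases h with rfl | ⟨x, hx, rfl⟩ | ⟨x, hx, rfl⟩ <;> simp [card_insert_of_notMem, *]

end Finset

section GreedyStep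

open Finset

variable {V : Type*} [DecidableEq V]

def greedyStep (C : Finset V) (e : V × V) : Finset V :=
  if e.1 ∈ C ∨ e.2 ∈ C then C else insert e.1 (insert e.2 C)

theorem greedyCover_eq_foldl (L : List (V × V)) : greedyCover L = L.foldl greedyStep ∅ :=
  rfl

theorem greedyStep_of_covered {C : Finset V} {e : V × V} (h : e.1 ∈ C ∨ e.2 ∈ C) :
    greedyStep C e = C :=
  if_pos h

theorem greedyStep_of_not_covered {C : Finset V} {e : V × V} (h : ¬(e.1 ∈ C ∨ e.2 ∈ C)) :
    greedyStep C e = insert e.1 (insert e.2 C) :=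
  if_neg h

theorem subset_greedyStep (C : Finset V) (e : V × V) : C ⊆ greedyStep C e := by
  unfold greedyStep
  split_ifs
  exacts [subset_rfl, (subset_insert _ _).trans (subset_insert _ _)]

theorem greedyStep_erase {C : Finset V} {v : V} {e : V × V} (h₁ : e.1 ≠ v) (h₂ : e.2 ≠ v) :
    (greedyStep C e).erase v = greedyStep (C.erase v) e := by
  simp only [greedyStep, mem_erase, h₁, h₂, ne_eq, not_false_eq_true, true_and]
  split_ifs <;> simp only [erase_insert_of_ne h₁, erase_insert_of_ne h₂]

theorem withinOne_greedyStep_insert {x : V} {t : Finset V} (hx : x ∉ t) (e : V × V) :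
    WithinOne (greedyStep (insert x t) e) (greedyStep t e) := by
  obtain ⟨a, b⟩ := e
  by_cases ht : a ∈ t ∨ b ∈ t
  · have hs : a ∈ insert x t ∨ b ∈ insert x t := ht.imp (mem_insert_of_mem ·) (mem_insert_of_mem ·)
    rw [greedyStep_of_covered hs, greedyStep_of_covered ht]
    exact withinOne_insert x t
  rw [greedyStep_of_not_covered (C := t) ht]
  by_cases hs : a ∈ insert x t ∨ b ∈ insert x t
  · -- only `x` covers the edge, so it is an endpoint
    rw [greedyStep_of_covered hs]
    obtain rfl | rfl : x = a ∨ x = b := by simp only [mem_insert] at hs; tauto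
    · rw [insert_comm]
      exact (withinOne_insert b _).symm
    · exact (withinOne_insert a _).symm
  · rw [greedyStep_of_not_covered hs]
    simp only [mem_insert, not_or] at hs
    refine Or.inr (Or.inl ⟨x, ?_, by simp only [insert_comm x]⟩)
    simp only [mem_insert, not_or]
    exact ⟨Ne.symm hs.1.1, Ne.symm hs.2.1, hx⟩

theorem Finset.WithinOne.greedyStep {s t : Finset V} (h : WithinOne s t) (e : V × V) :
    WithinOne (greedyStep s e) (greedyStep t e) := by
  rcases h with rfl | ⟨x, hx, rfl⟩ | ⟨x, hx, rfl⟩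
  · exact Or.inl rfl
  · exact withinOne_greedyStep_insert hx e
  · exact (withinOne_greedyStep_insert hx e).symm

/-- The invariant linking the greedy run on all edges (state `C`) with the run on the edges
avoiding `v` (state `C'`). -/
def CoupledCovers (v : V) (C C' : Finset V) : Prop :=
  C = C' ∨ (v ∈ C ∧ WithinOne (C.erase v) C')

theorem CoupledCovers.greedyStep_of_ne {v : V} {C C' : Finset V} (h : CoupledCovers v C C')
    {e : V × V} (h₁ : e.1 ≠ v) (h₂ : e.2 ≠ v) :
    CoupledCovers v (greedyStep C e) (greedyStep C' e) := by
  rcases h with rfl | ⟨hv, hw⟩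
  · exact Or.inl rfl
  · exact Or.inr ⟨subset_greedyStep C e hv, greedyStep_erase h₁ h₂ ▸ hw.greedyStep e⟩

theorem CoupledCovers.greedyStep_of_incident {v : V} {C C' : Finset V}
    (h : CoupledCovers v C C') {e : V × V} (he : e.1 = v ∨ e.2 = v) :
    CoupledCovers v (greedyStep C e) C' := by
  rcases h with rfl | ⟨hv, hw⟩
  · by_cases hc : e.1 ∈ C ∨ e.2 ∈ C
    · exact Or.inl (greedyStep_of_covered hc)
    have hvC : v ∉ C := by rcases he with rfl | rfl <;> tauto
    rw [greedyStep_of_not_covered hc]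
    refine Or.inr ⟨by rcases he with rfl | rfl <;> simp, ?_⟩
    obtain ⟨a, b⟩ := e
    have hsub : C ⊆ (insert a (insert b C)).erase v :=
      subset_erase.mpr ⟨(subset_insert _ _).trans (subset_insert _ _), hvC⟩
    rcases he with rfl | rfl
    · exact withinOne_of_subset_of_subset_insert hsub (erase_insert_subset _ _)
    · rw [insert_comm] at hsub ⊢
      exact withinOne_of_subset_of_subset_insert hsub (erase_insert_subset _ _)
  · rw [greedyStep_of_covered (by rcases he with rfl | rfl <;> simp [hv])]
    exact Or.inr ⟨hv, hw⟩

theorem CoupledCovers.abs_card_sub_le {v : V} {C C' : Finset V} (h : CoupledCovers v C C') :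
    |(#C : ℤ) - #C'| ≤ 2 := by
  rcases h with rfl | ⟨hv, hw⟩
  · simp
  · have hcard := card_erase_add_one hv
    have := abs_le.mp hw.abs_card_sub_le
    rw [abs_le]
    omega

end GreedyStep

theorem greedyCover_node_sensitivity_general {V : Type*} [DecidableEq V]
    (L : List (V × V)) (vplus : V) :
    |((greedyCover L).card : ℤ) -
      ((greedyCover (L.filter (fun e => e.1 ≠ vplus ∧ e.2 ≠ vplus))).card : ℤ)| ≤ 2 := by
  have hrun : CoupledCovers vplus (L.foldl greedyStep ∅)
      ((L.filter (fun e => e.1 ≠ vplus ∧ e.2 ≠ vplus)).foldl greedyStep ∅) :=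
    List.foldl_filter_of_rel (CoupledCovers vplus) _ greedyStep
      (fun _ _ _ he h => by
        simp only [decide_eq_true_eq] at he
        exact h.greedyStep_of_ne he.1 he.2)
      (fun _ _ _ he h => by
        simp only [decide_eq_true_eq, not_and_or, not_not] at he
        exact h.greedyStep_of_incident he)
      L ∅ ∅ (Or.inl rfl)
  rw [greedyCover_eq_foldl, greedyCover_eq_foldl]
  exact hrun.abs_card_sub_le

/-- Under a stable edge ordering, removing one node and its incident edges
changes the size of the greedy vertex cover by at most 2. -/
theorem greedyCover_node_sensitivity {V : Type*} [DecidableEq V]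
    (L : List (V × V)) (vplus : V) (hsimple : ∀ e ∈ L, e.1 ≠ e.2) :
    |((greedyCover L).card : ℤ) -
      ((greedyCover (L.filter (fun e => e.1 ≠ vplus ∧ e.2 ≠ vplus))).card : ℤ)| ≤ 2 :=
  greedyCover_node_sensitivity_general L vplus
end

section
/- Under a stable edge ordering, the bounded-degree edge-addition projection with threshold θ changes its edge count by at most θ when a node and its incident edges are added to the graph. -/
/-!
Run the projection on `G` and on `G - v⁺` side by side and compare the degree sequences `d`, `d'`
of the two outputs. A kept edge at `v⁺` raises `d v⁺` by one and `‖d - d'‖₁` by at most two. An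
edge avoiding `v⁺` that only the first run keeps is rejected by the second at an endpoint `w` with
`d w < θ ≤ d' w`, so keeping it moves `d w` towards `d' w`, which pays for the other endpoint
(symmetrically if only the second run keeps it). Hence `‖d - d'‖₁ ≤ 2 d v⁺ ≤ 2θ` throughout, and
since edges are not loops, twice the difference of the edge counts is `∑ (d - d')`.
-/

/-- Degree of a vertex in a list of edges. -/
def listDeg {V : Type*} [DecidableEq V] (L : List (V × V)) (u : V) : ℕ :=
  (L.filter (fun e => e.1 = u ∨ e.2 = u)).length

/-- Edge-addition projection: process edges in order, keeping an edge iff both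
endpoints currently have degree `< θ` among the kept edges. -/
def edgeAddProj {V : Type*} [DecidableEq V] (θ : ℕ) (L : List (V × V)) :
    List (V × V) :=
  L.foldl (fun kept e =>
    if listDeg kept e.1 < θ ∧ listDeg kept e.2 < θ then kept ++ [e] else kept) []

section EdgeAddition

variable {V : Type*} [DecidableEq V]

theorem listDeg_nil (u : V) : listDeg ([] : List (V × V)) u = 0 := rfl

theorem listDeg_append (K K' : List (V × V)) (u : V) :
    listDeg (K ++ K') u = listDeg K u + listDeg K' u := by
  simp [listDeg, List.filter_append]

theorem listDeg_singleton (e : V × V) (u : V) :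
    listDeg [e] u = if e.1 = u ∨ e.2 = u then 1 else 0 := by
  by_cases h : e.1 = u ∨ e.2 = u <;> simp [listDeg, h]

theorem sum_listDeg_singleton_le (T : Finset V) (e : V × V) :
    ∑ u ∈ T, listDeg [e] u ≤ 2 := by
  simp only [listDeg_singleton, Finset.sum_boole, Nat.cast_id]
  refine (Finset.card_le_card fun u hu => ?_).trans (Finset.card_le_two (a := e.1) (b := e.2))
  rcases (Finset.mem_filter.mp hu).2 with rfl | rfl <;> simp

theorem sum_listDeg_singleton_eq_two {T : Finset V} {e : V × V} (hne : e.1 ≠ e.2) (h₁ : e.1 ∈ T)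
    (h₂ : e.2 ∈ T) : ∑ u ∈ T, listDeg [e] u = 2 := by
  simp [listDeg_singleton, Finset.sum_boole, Finset.filter_or, Finset.filter_eq, h₁, h₂,
    Finset.card_pair hne]

theorem sum_listDeg_eq_two_mul_length {T : Finset V} {K : List (V × V)}
    (hK : ∀ e ∈ K, e.1 ≠ e.2 ∧ e.1 ∈ T ∧ e.2 ∈ T) :
    ∑ u ∈ T, listDeg K u = 2 * K.length := by
  induction K with
  | nil => simp [listDeg_nil]
  | cons e K ih =>
    obtain ⟨hne, h₁, h₂⟩ := hK e List.mem_cons_self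
    rw [← List.singleton_append]
    simp only [listDeg_append, Finset.sum_add_distrib, sum_listDeg_singleton_eq_two hne h₁ h₂,
      ih fun e' he' => hK e' (List.mem_cons_of_mem _ he'), List.length_append,
      List.length_singleton]
    ring

def degDist (T : Finset V) (K K' : List (V × V)) : ℤ :=
  ∑ u ∈ T, |(listDeg K u : ℤ) - listDeg K' u|

theorem degDist_nil (T : Finset V) : degDist T [] [] = 0 := by
  simp [degDist, listDeg_nil]

theorem degDist_comm (T : Finset V) (K K' : List (V × V)) : degDist T K K' = degDist T K' K := by
  simp only [degDist, abs_sub_comm]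

theorem degDist_append_singleton (T : Finset V) (K K' : List (V × V)) (e : V × V) :
    degDist T (K ++ [e]) (K' ++ [e]) = degDist T K K' := by
  simp only [degDist, listDeg_append, Nat.cast_add, add_sub_add_right_eq_sub]

theorem degDist_append_singleton_left_le (T : Finset V) (K K' : List (V × V)) (e : V × V) :
    degDist T (K ++ [e]) K' ≤ degDist T K K' + ∑ u ∈ T, (listDeg [e] u : ℤ) := by
  rw [degDist, degDist, ← Finset.sum_add_distrib]
  refine Finset.sum_le_sum fun u _ => ?_
  rw [listDeg_append, Nat.cast_add, add_sub_right_comm]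
  simpa using abs_add_le ((listDeg K u : ℤ) - listDeg K' u) (listDeg [e] u)

theorem degDist_append_singleton_left_le_add_two (T : Finset V) (K K' : List (V × V))
    (e : V × V) : degDist T (K ++ [e]) K' ≤ degDist T K K' + 2 := by
  have h₂ : ∑ u ∈ T, (listDeg [e] u : ℤ) ≤ 2 := by exact_mod_cast sum_listDeg_singleton_le T e
  linarith [degDist_append_singleton_left_le T K K' e]

theorem degDist_append_singleton_left_le_of_lt {T : Finset V} {K K' : List (V × V)}
    {e : V × V} {w : V} (hw : w ∈ T) (hew : e.1 = w ∨ e.2 = w)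
    (hlt : listDeg K w < listDeg K' w) : degDist T (K ++ [e]) K' ≤ degDist T K K' := by
  have hew' : listDeg [e] w = 1 := by simp [listDeg_singleton, hew]
  have hrest := degDist_append_singleton_left_le (T.erase w) K K' e
  have hsum : ∑ u ∈ T, (listDeg [e] u : ℤ) ≤ 2 := by exact_mod_cast sum_listDeg_singleton_le T e
  rw [← Finset.add_sum_erase T _ hw, hew'] at hsum
  have hw_new : |((listDeg (K ++ [e]) w : ℕ) : ℤ) - listDeg K' w|
      = |(listDeg K w : ℤ) - listDeg K' w| - 1 := by
    rw [listDeg_append, hew', abs_of_nonpos (by omega), abs_of_neg (by omega)]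
    push_cast; ring
  unfold degDist at hrest ⊢
  rw [← Finset.add_sum_erase T _ hw, ← Finset.add_sum_erase T _ hw, hw_new]
  push_cast at hsum
  linarith

def edgeAddStep (θ : ℕ) (kept : List (V × V)) (e : V × V) : List (V × V) :=
  if listDeg kept e.1 < θ ∧ listDeg kept e.2 < θ then kept ++ [e] else kept

theorem edgeAddProj_eq_foldl (θ : ℕ) (L : List (V × V)) :
    edgeAddProj θ L = L.foldl (edgeAddStep θ) [] := rfl

theorem foldl_edgeAddStep_sublist (θ : ℕ) (L K : List (V × V)) :
    (L.foldl (edgeAddStep θ) K).Sublist (K ++ L) := by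
  induction L generalizing K with
  | nil => simp
  | cons e L ih =>
    refine (ih _).trans ?_
    rw [← List.singleton_append, ← List.append_assoc]
    refine List.Sublist.append_right ?_ L
    unfold edgeAddStep
    split_ifs
    · exact List.Sublist.refl _
    · exact List.sublist_append_left K [e]

theorem edgeAddProj_sublist (θ : ℕ) (L : List (V × V)) : (edgeAddProj θ L).Sublist L :=
  foldl_edgeAddStep_sublist θ L []

theorem listDeg_edgeAddStep_le {θ : ℕ} {K : List (V × V)} {u : V} (e : V × V)
    (hu : listDeg K u ≤ θ) : listDeg (edgeAddStep θ K e) u ≤ θ := by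
  unfold edgeAddStep
  split_ifs with hacc
  · rw [listDeg_append, listDeg_singleton]
    split_ifs with hue
    · rcases hue with rfl | rfl <;> omega
    · omega
  · exact hu

theorem listDeg_edgeAddProj_le (θ : ℕ) (L : List (V × V)) (u : V) :
    listDeg (edgeAddProj θ L) u ≤ θ := by
  suffices ∀ K, listDeg K u ≤ θ → listDeg (L.foldl (edgeAddStep θ) K) u ≤ θ from
    this [] (Nat.zero_le θ)
  induction L with
  | nil => exact fun _ h => h
  | cons e L ih => exact fun K h => ih _ (listDeg_edgeAddStep_le e h)

theorem degDist_edgeAddStep_le {θ : ℕ} {T : Finset V} (K K' : List (V × V)) {e : V × V}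
    (h₁ : e.1 ∈ T) (h₂ : e.2 ∈ T) :
    degDist T (edgeAddStep θ K e) (edgeAddStep θ K' e) ≤ degDist T K K' := by
  unfold edgeAddStep
  split_ifs with hK hK'
  · exact (degDist_append_singleton T K K' e).le
  · rcases not_and_or.mp hK' with h | h
    · exact degDist_append_singleton_left_le_of_lt h₁ (Or.inl rfl) (by omega)
    · exact degDist_append_singleton_left_le_of_lt h₂ (Or.inr rfl) (by omega)
  · rw [degDist_comm, degDist_comm T K]
    rcases not_and_or.mp hK with h | h
    · exact degDist_append_singleton_left_le_of_lt h₁ (Or.inl rfl) (by omega)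
    · exact degDist_append_singleton_left_le_of_lt h₂ (Or.inr rfl) (by omega)
  · exact le_rfl

theorem degDist_edgeAddStep_left_sub_le {θ : ℕ} {T : Finset V} (K K' : List (V × V))
    {e : V × V} {v : V} (hv : e.1 = v ∨ e.2 = v) :
    degDist T (edgeAddStep θ K e) K' - 2 * listDeg (edgeAddStep θ K e) v
      ≤ degDist T K K' - 2 * listDeg K v := by
  unfold edgeAddStep
  split_ifs
  · have hdeg : listDeg (K ++ [e]) v = listDeg K v + 1 := by
      simp [listDeg_append, listDeg_singleton, hv]
    rw [hdeg]
    push_cast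
    linarith [degDist_append_singleton_left_le_add_two T K K' e]
  · exact le_rfl

theorem degDist_foldl_edgeAddStep_sub_le (θ : ℕ) {T : Finset V} (v : V) {L : List (V × V)}
    (hL : ∀ e ∈ L, e.1 ∈ T ∧ e.2 ∈ T) (K K' : List (V × V)) :
    degDist T (L.foldl (edgeAddStep θ) K)
        ((L.filter fun e => e.1 ≠ v ∧ e.2 ≠ v).foldl (edgeAddStep θ) K')
        - 2 * listDeg (L.foldl (edgeAddStep θ) K) v
      ≤ degDist T K K' - 2 * listDeg K v := by
  induction L generalizing K K' with
  | nil => exact le_rfl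
  | cons e L ih =>
    have ih := ih fun e' he' => hL e' (List.mem_cons_of_mem e he')
    obtain ⟨h₁, h₂⟩ := hL e List.mem_cons_self
    by_cases hv : e.1 ≠ v ∧ e.2 ≠ v
    · rw [List.filter_cons_of_pos (by simpa using hv), List.foldl_cons, List.foldl_cons]
      have hdeg : listDeg (edgeAddStep θ K e) v = listDeg K v := by
        unfold edgeAddStep
        split_ifs <;> simp [listDeg_append, listDeg_singleton, hv.1, hv.2]
      linarith [ih (edgeAddStep θ K e) (edgeAddStep θ K' e),
        degDist_edgeAddStep_le (θ := θ) K K' h₁ h₂]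
    · rw [List.filter_cons_of_neg (by simpa using hv), List.foldl_cons]
      have hv : e.1 = v ∨ e.2 = v := by tauto
      linarith [ih (edgeAddStep θ K e) K',
        degDist_edgeAddStep_left_sub_le (θ := θ) (T := T) K K' hv]

theorem two_mul_abs_length_sub_le_degDist {T : Finset V} {K K' : List (V × V)}
    (hK : ∀ e ∈ K, e.1 ≠ e.2 ∧ e.1 ∈ T ∧ e.2 ∈ T)
    (hK' : ∀ e ∈ K', e.1 ≠ e.2 ∧ e.1 ∈ T ∧ e.2 ∈ T) :
    2 * |(K.length : ℤ) - K'.length| ≤ degDist T K K' := by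
  have hsum : 2 * ((K.length : ℤ) - K'.length)
      = ∑ u ∈ T, ((listDeg K u : ℤ) - listDeg K' u) := by
    rw [Finset.sum_sub_distrib, ← Nat.cast_sum, ← Nat.cast_sum,
      sum_listDeg_eq_two_mul_length hK, sum_listDeg_eq_two_mul_length hK']
    push_cast; ring
  calc 2 * |(K.length : ℤ) - K'.length| = |∑ u ∈ T, ((listDeg K u : ℤ) - listDeg K' u)| := by
        rw [← hsum, abs_mul, abs_two]
    _ ≤ degDist T K K' := Finset.abs_sum_le_sum_abs _ _

end EdgeAddition

theorem edgeAddProj_node_sensitivity_general {V : Type*} [DecidableEq V]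
    (θ : ℕ) (L : List (V × V)) (vplus : V)
    (hsimple : ∀ e ∈ L, e.1 ≠ e.2) :
    |((edgeAddProj θ L).length : ℤ) -
      ((edgeAddProj θ (L.filter (fun e => e.1 ≠ vplus ∧ e.2 ≠ vplus))).length : ℤ)|
      ≤ θ := by
  set T : Finset V := (L.map Prod.fst ++ L.map Prod.snd).toFinset
  have hT : ∀ e ∈ L, e.1 ≠ e.2 ∧ e.1 ∈ T ∧ e.2 ∈ T := fun e he =>
    ⟨hsimple e he, List.mem_toFinset.mpr (List.mem_append_left _ (List.mem_map_of_mem he)),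
      List.mem_toFinset.mpr (List.mem_append_right _ (List.mem_map_of_mem he))⟩
  have hpot := degDist_foldl_edgeAddStep_sub_le θ vplus (fun e he => (hT e he).2) [] []
  rw [← edgeAddProj_eq_foldl, ← edgeAddProj_eq_foldl, degDist_nil, listDeg_nil] at hpot
  set L' := L.filter fun e => e.1 ≠ vplus ∧ e.2 ≠ vplus
  have hlen := two_mul_abs_length_sub_le_degDist
    (fun e he => hT e ((edgeAddProj_sublist θ L).subset he))
    (fun e he => hT e (List.mem_of_mem_filter ((edgeAddProj_sublist θ L').subset he)))
  have hdeg := listDeg_edgeAddProj_le θ L vplus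
  omega

/-- Under a stable edge ordering, adding a node and its incident edges changes
the edge count of the bounded-degree projection by at most `θ`. -/
theorem edgeAddProj_node_sensitivity {V : Type*} [DecidableEq V]
    (θ : ℕ) (L : List (V × V)) (vplus : V)
    (hsimple : ∀ e ∈ L, e.1 ≠ e.2) (hnodup : L.Nodup)
    (hsym : ∀ e ∈ L, (e.2, e.1) ∉ L) :
    |((edgeAddProj θ L).length : ℤ) -
      ((edgeAddProj θ (L.filter (fun e => e.1 ≠ vplus ∧ e.2 ≠ vplus))).length : ℤ)|
      ≤ θ :=
  edgeAddProj_node_sensitivity_general θ L vplus hsimple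
end

section
/- Under a stable edge ordering, adding a node to a graph cannot decrease the edge count of the bounded-degree projection: |π_θ(G').E| ≥ |π_θ(G).E| where G' = G plus one node and its incident edges. -/
section Aux

variable {V : Type*} [DecidableEq V]

/-- One step of the edge-addition projection. -/
def eaStep (θ : ℕ) (kept : List (V × V)) (e : V × V) : List (V × V) :=
  if listDeg kept e.1 < θ ∧ listDeg kept e.2 < θ then kept ++ [e] else kept

lemma edgeAddProj_eq (θ : ℕ) (L : List (V × V)) :
    edgeAddProj θ L = L.foldl (eaStep θ) [] := rfl

lemma listDeg_append_single (K : List (V × V)) (e : V × V) (u : V) :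
    listDeg (K ++ [e]) u = listDeg K u + (if u = e.1 ∨ u = e.2 then 1 else 0) := by
  simp only [listDeg, List.filter_append, List.length_append]
  congr 1
  by_cases h : u = e.1 ∨ u = e.2
  · rw [if_pos h]
    have : (e.1 = u ∨ e.2 = u) := by tauto
    simp [List.filter, this]
  · rw [if_neg h]
    have : ¬ (e.1 = u ∨ e.2 = u) := by tauto
    simp [List.filter, this]

/-- Simulation relation: the second run has at most as many kept edges, and
degrees away from `v` agree except possibly a single ±1 discrepancy. -/
def EaRel (θ : ℕ) (v : V) (K₁ K₂ : List (V × V)) : Prop :=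
  (K₂.length ≤ K₁.length ∧ ∀ u, u ≠ v → listDeg K₁ u = listDeg K₂ u) ∨
  (K₂.length < K₁.length ∧ ∃ x, ∀ u, u ≠ v →
      listDeg K₁ u = listDeg K₂ u + (if u = x then 1 else 0)) ∨
  (K₂.length ≤ K₁.length ∧ ∃ x, ∀ u, u ≠ v →
      listDeg K₂ u = listDeg K₁ u + (if u = x then 1 else 0))

lemma eaRel_len {θ : ℕ} {v : V} {K₁ K₂ : List (V × V)} (h : EaRel θ v K₁ K₂) :
    K₂.length ≤ K₁.length := by
  rcases h with ⟨h, -⟩ | ⟨h, -⟩ | ⟨h, -⟩ <;> omega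

lemma eaRel_step (θ : ℕ) (v : V) (e : V × V) (ha : e.1 ≠ v) (hb : e.2 ≠ v)
    (K₁ K₂ : List (V × V)) (h : EaRel θ v K₁ K₂) :
    EaRel θ v (eaStep θ K₁ e) (eaStep θ K₂ e) := by
  obtain ⟨hlen, hdeg⟩ | ⟨hlen, x, hdeg⟩ | ⟨hlen, x, hdeg⟩ := h
  · -- equal degrees
    have h1 := hdeg e.1 ha
    have h2 := hdeg e.2 hb
    unfold eaStep
    by_cases hc : listDeg K₂ e.1 < θ ∧ listDeg K₂ e.2 < θ
    · rw [if_pos hc, if_pos (by omega : listDeg K₁ e.1 < θ ∧ listDeg K₁ e.2 < θ)]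
      refine Or.inl ⟨by simp; omega, fun u hu => ?_⟩
      rw [listDeg_append_single, listDeg_append_single, hdeg u hu]
    · rw [if_neg hc, if_neg (by omega : ¬ (listDeg K₁ e.1 < θ ∧ listDeg K₁ e.2 < θ))]
      exact Or.inl ⟨hlen, hdeg⟩
  · -- phase A: K₁ has a surplus at x
    have h1 := hdeg e.1 ha
    have h2 := hdeg e.2 hb
    have t1 : (if e.1 = x then 1 else 0) ≤ 1 := by split <;> omega
    have t2 : (if e.2 = x then 1 else 0) ≤ 1 := by split <;> omega
    unfold eaStep
    by_cases hc1 : listDeg K₁ e.1 < θ ∧ listDeg K₁ e.2 < θ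
    · have hc2 : listDeg K₂ e.1 < θ ∧ listDeg K₂ e.2 < θ := by omega
      rw [if_pos hc1, if_pos hc2]
      refine Or.inr (Or.inl ⟨by simp; omega, x, fun u hu => ?_⟩)
      rw [listDeg_append_single, listDeg_append_single, hdeg u hu]
      omega
    · by_cases hc2 : listDeg K₂ e.1 < θ ∧ listDeg K₂ e.2 < θ
      · rw [if_neg hc1, if_pos hc2]
        by_cases hxa : x = e.1 <;> by_cases hxb : x = e.2
        · -- a = b = x : becomes equal phase
          subst hxa
          refine Or.inl ⟨by simp; omega, fun u hu => ?_⟩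
          rw [listDeg_append_single]
          have hthis := hdeg u hu
          rcases eq_or_ne u e.1 with hu1 | hu1
          · simp [hu1, ← hxb] at hthis ⊢; omega
          · have hu2 : u ≠ e.2 := by rw [← hxb]; exact hu1
            simp [hu1, hu2] at hthis ⊢; omega
        · -- x = a, x ≠ b : becomes phase B at e.2
          subst hxa
          refine Or.inr (Or.inr ⟨by simp; omega, e.2, fun u hu => ?_⟩)
          rw [listDeg_append_single]
          have hthis := hdeg u hu
          rcases eq_or_ne u e.1 with hu1 | hu1 <;> rcases eq_or_ne u e.2 with hu2 | hu2
          · exact absurd (hu1.symm.trans hu2) hxb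
          · simp [hu1, hu2, hxb, Ne.symm hxb] at hthis ⊢; omega
          · simp [hu1, hu2, hxb, Ne.symm hxb] at hthis ⊢; omega
          · simp [hu1, hu2] at hthis ⊢; omega
        · -- x = b, x ≠ a : becomes phase B at e.1
          subst hxb
          refine Or.inr (Or.inr ⟨by simp; omega, e.1, fun u hu => ?_⟩)
          rw [listDeg_append_single]
          have hthis := hdeg u hu
          rcases eq_or_ne u e.1 with hu1 | hu1 <;> rcases eq_or_ne u e.2 with hu2 | hu2
          · exact absurd (hu2.symm.trans hu1) hxa
          · simp [hu1, hu2, hxa, Ne.symm hxa] at hthis ⊢; omega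
          · simp [hu1, hu2, hxa, Ne.symm hxa] at hthis ⊢; omega
          · simp [hu1, hu2] at hthis ⊢; omega
        · -- x not an endpoint: contradiction
          simp [Ne.symm hxa, Ne.symm hxb] at h1 h2
          omega
      · rw [if_neg hc1, if_neg hc2]
        exact Or.inr (Or.inl ⟨hlen, x, hdeg⟩)
  · -- phase B: K₂ has a surplus at x
    have h1 := hdeg e.1 ha
    have h2 := hdeg e.2 hb
    have t1 : (if e.1 = x then 1 else 0) ≤ 1 := by split <;> omega
    have t2 : (if e.2 = x then 1 else 0) ≤ 1 := by split <;> omega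
    unfold eaStep
    by_cases hc2 : listDeg K₂ e.1 < θ ∧ listDeg K₂ e.2 < θ
    · have hc1 : listDeg K₁ e.1 < θ ∧ listDeg K₁ e.2 < θ := by omega
      rw [if_pos hc1, if_pos hc2]
      refine Or.inr (Or.inr ⟨by simp; omega, x, fun u hu => ?_⟩)
      rw [listDeg_append_single, listDeg_append_single, hdeg u hu]
      omega
    · by_cases hc1 : listDeg K₁ e.1 < θ ∧ listDeg K₁ e.2 < θ
      · rw [if_pos hc1, if_neg hc2]
        by_cases hxa : x = e.1 <;> by_cases hxb : x = e.2
        · -- a = b = x : becomes equal phase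
          subst hxa
          refine Or.inl ⟨by simp; omega, fun u hu => ?_⟩
          rw [listDeg_append_single]
          have hthis := hdeg u hu
          rcases eq_or_ne u e.1 with hu1 | hu1
          · simp [hu1, ← hxb] at hthis ⊢; omega
          · have hu2 : u ≠ e.2 := by rw [← hxb]; exact hu1
            simp [hu1, hu2] at hthis ⊢; omega
        · -- becomes phase A at e.2
          subst hxa
          refine Or.inr (Or.inl ⟨by simp; omega, e.2, fun u hu => ?_⟩)
          rw [listDeg_append_single]
          have hthis := hdeg u hu
          rcases eq_or_ne u e.1 with hu1 | hu1 <;> rcases eq_or_ne u e.2 with hu2 | hu2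
          · exact absurd (hu1.symm.trans hu2) hxb
          · simp [hu1, hu2, hxb, Ne.symm hxb] at hthis ⊢; omega
          · simp [hu1, hu2, hxb, Ne.symm hxb] at hthis ⊢; omega
          · simp [hu1, hu2] at hthis ⊢; omega
        · -- becomes phase A at e.1
          subst hxb
          refine Or.inr (Or.inl ⟨by simp; omega, e.1, fun u hu => ?_⟩)
          rw [listDeg_append_single]
          have hthis := hdeg u hu
          rcases eq_or_ne u e.1 with hu1 | hu1 <;> rcases eq_or_ne u e.2 with hu2 | hu2
          · exact absurd (hu2.symm.trans hu1) hxa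
          · simp [hu1, hu2, hxa, Ne.symm hxa] at hthis ⊢; omega
          · simp [hu1, hu2, hxa, Ne.symm hxa] at hthis ⊢; omega
          · simp [hu1, hu2] at hthis ⊢; omega
        · simp [Ne.symm hxa, Ne.symm hxb] at h1 h2
          omega
      · rw [if_neg hc1, if_neg hc2]
        exact Or.inr (Or.inr ⟨hlen, x, hdeg⟩)

lemma eaRel_run (θ : ℕ) (v : V) :
    ∀ (M : List (V × V)), (∀ e ∈ M, e.1 ≠ v ∧ e.2 ≠ v) →
    ∀ K₁ K₂, EaRel θ v K₁ K₂ →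
      EaRel θ v (M.foldl (eaStep θ) K₁) (M.foldl (eaStep θ) K₂) := by
  intro M
  induction M with
  | nil => intro _ K₁ K₂ h; exact h
  | cons e M ih =>
      intro hM K₁ K₂ h
      have he := hM e (by simp)
      exact ih (fun e' he' => hM e' (by simp [he'])) _ _
        (eaRel_step θ v e he.1 he.2 K₁ K₂ h)

/-- Adding an edge incident to `v` to the state preserves the relation. -/
lemma eaRel_step_inc (θ : ℕ) (v : V) (e : V × V) (he : e.1 = v ∨ e.2 = v)
    (K : List (V × V)) : EaRel θ v (eaStep θ K e) K := by
  unfold eaStep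
  by_cases hc : listDeg K e.1 < θ ∧ listDeg K e.2 < θ
  · rw [if_pos hc]
    rcases he with he | he
    · refine Or.inr (Or.inl ⟨by simp, e.2, fun u hu => ?_⟩)
      rw [listDeg_append_single]
      have h1 : ¬ u = e.1 := by rw [he]; exact hu
      by_cases h2 : u = e.2 <;> simp [h1, h2]
    · refine Or.inr (Or.inl ⟨by simp, e.1, fun u hu => ?_⟩)
      rw [listDeg_append_single]
      have h2 : ¬ u = e.2 := by rw [he]; exact hu
      by_cases h1 : u = e.1 <;> simp [h1, h2]
  · rw [if_neg hc]
    exact Or.inl ⟨le_rfl, fun u _ => rfl⟩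

/-- Removing the last `v`-incident edge cannot increase the kept count. -/
lemma drop_last_inc (θ : ℕ) (v : V) (L₁ L₂ : List (V × V)) (e : V × V)
    (he : e.1 = v ∨ e.2 = v) (hL₂ : ∀ e' ∈ L₂, e'.1 ≠ v ∧ e'.2 ≠ v) :
    (edgeAddProj θ (L₁ ++ L₂)).length ≤ (edgeAddProj θ (L₁ ++ e :: L₂)).length := by
  rw [edgeAddProj_eq, edgeAddProj_eq, List.foldl_append, List.foldl_append,
    List.foldl_cons]
  exact eaRel_len (eaRel_run θ v L₂ hL₂ _ _ (eaRel_step_inc θ v e he _))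

lemma exists_split (p : V × V → Prop) [DecidablePred p] :
    ∀ (L : List (V × V)), (∃ e ∈ L, p e) →
      ∃ L₁ e L₂, L = L₁ ++ e :: L₂ ∧ p e ∧ ∀ e' ∈ L₂, ¬ p e' := by
  intro L
  induction L with
  | nil => rintro ⟨e, he, -⟩; simp at he
  | cons a T ih =>
      intro hex
      by_cases hT : ∃ e ∈ T, p e
      · obtain ⟨L₁, e, L₂, rfl, hpe, hL₂⟩ := ih hT
        exact ⟨a :: L₁, e, L₂, rfl, hpe, hL₂⟩
      · have hpa : p a := by
          rcases hex with ⟨e, he, hpe⟩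
          rcases List.mem_cons.mp he with rfl | he
          · exact hpe
          · exact absurd ⟨e, he, hpe⟩ hT
        refine ⟨[], a, T, rfl, hpa, fun e' he' => ?_⟩
        intro hpe'
        exact hT ⟨e', he', hpe'⟩

end Aux

/-- Under a stable edge ordering, adding a node cannot decrease the kept edge
count of the bounded-degree projection. -/
theorem edgeAddProj_node_mono {V : Type*} [DecidableEq V]
    (θ : ℕ) (L : List (V × V)) (vplus : V)
    (hsimple : ∀ e ∈ L, e.1 ≠ e.2) (hnodup : L.Nodup)
    (hsym : ∀ e ∈ L, (e.2, e.1) ∉ L) :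
    (edgeAddProj θ (L.filter (fun e => e.1 ≠ vplus ∧ e.2 ≠ vplus))).length ≤
      (edgeAddProj θ L).length := by
  clear hsimple hnodup hsym
  suffices H : ∀ (n : ℕ) (L : List (V × V)), L.length ≤ n →
      (edgeAddProj θ (L.filter (fun e => e.1 ≠ vplus ∧ e.2 ≠ vplus))).length ≤
        (edgeAddProj θ L).length from H L.length L le_rfl
  intro n
  induction n with
  | zero =>
      intro L hL
      rw [List.length_eq_zero_iff.mp (Nat.le_zero.mp hL)]
      simp
  | succ n ih =>
      intro L hL
      by_cases hex : ∃ e ∈ L, e.1 = vplus ∨ e.2 = vplus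
      · obtain ⟨L₁, e, L₂, rfl, hpe, hL₂⟩ :=
          exists_split (fun e => e.1 = vplus ∨ e.2 = vplus) L hex
        have hL₂' : ∀ e' ∈ L₂, e'.1 ≠ vplus ∧ e'.2 ≠ vplus := by
          intro e' he'
          have := hL₂ e' he'
          tauto
        have hfe : ¬ (e.1 ≠ vplus ∧ e.2 ≠ vplus) := by tauto
        have hfilter :
            (L₁ ++ e :: L₂).filter (fun e => e.1 ≠ vplus ∧ e.2 ≠ vplus) =
            (L₁ ++ L₂).filter (fun e => e.1 ≠ vplus ∧ e.2 ≠ vplus) := by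
          simp [List.filter_append, List.filter_cons, hfe]
        rw [hfilter]
        have hlen' : (L₁ ++ L₂).length ≤ n := by
          have := hL
          simp at this ⊢
          omega
        exact le_trans (ih (L₁ ++ L₂) hlen')
          (drop_last_inc θ vplus L₁ L₂ e hpe hL₂')
      · have : L.filter (fun e => e.1 ≠ vplus ∧ e.2 ≠ vplus) = L := by
          rw [List.filter_eq_self]
          intro a ha
          have : ¬ (a.1 = vplus ∨ a.2 = vplus) := fun h => hex ⟨a, ha, h⟩
          simpa using this
        rw [this]
end

section
/- In a conflict graph, the number of edges (minimal inconsistency measure) can change by exactly n−1 when one tuple is added to a database of n−1 tuples: there is a database with FD constraint where adding one tuple creates conflicts with all existing tuples. -/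
/-- There is a database (n−1 identical tuples plus one tuple agreeing on the FD's
left-hand side but differing on the right) whose conflict graph has `n − 1`
edges, while removing the added tuple's conflicts leaves `0` edges. -/
theorem conflict_edges_sensitivity_tight (n : ℕ) (hn : 1 ≤ n) :
    let row : Fin n → ℕ × ℕ := fun i => (0, if i.val = n - 1 then 1 else 0)
    let G' : SimpleGraph (Fin n) :=
      SimpleGraph.fromRel (fun i j => (row i).1 = (row j).1 ∧ (row i).2 ≠ (row j).2)
    G'.edgeSet.ncard = n - 1 ∧
      (G'.deleteEdges (G'.incidenceSet ⟨n - 1, by omega⟩)).edgeSet.ncard = 0 := by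
  intro row G'
  have hn1 : n - 1 < n := by omega
  set last : Fin n := ⟨n - 1, hn1⟩ with hlast
  have hval : ∀ i : Fin n, i.val = n - 1 ↔ i = last := by
    intro i; simp [Fin.ext_iff, hlast]
  have hadj : ∀ a b : Fin n, G'.Adj a b ↔ a ≠ b ∧ (a = last ∨ b = last) := by
    intro a b
    simp only [G', SimpleGraph.fromRel_adj, row]
    constructor
    · rintro ⟨hne, h⟩
      refine ⟨hne, ?_⟩
      by_contra hc
      push_neg at hc
      simp only [hval] at h
      rcases h with ⟨_, h2⟩ | ⟨_, h2⟩ <;> simp [hc.1, hc.2] at h2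
    · rintro ⟨hne, h⟩
      refine ⟨hne, ?_⟩
      rcases h with h | h
      · left
        have hb : ¬ b.val = n - 1 := by rw [hval]; rintro rfl; exact hne h
        have ha : a.val = n - 1 := (hval a).2 h
        simp [ha, hb]
      · right
        have ha : ¬ a.val = n - 1 := by rw [hval]; rintro rfl; exact hne h.symm
        have hb : b.val = n - 1 := (hval b).2 h
        simp [ha, hb]
  have hE : G'.edgeSet = (fun i : Fin n => s(i, last)) '' {i | i ≠ last} := by
    ext e
    induction e using Sym2.ind with
    | _ a b =>
      simp only [SimpleGraph.mem_edgeSet, hadj, Set.mem_image, Set.mem_setOf_eq]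
      constructor
      · rintro ⟨hne, h | h⟩
        · exact ⟨b, fun hb => hne (h.trans hb.symm), by rw [Sym2.eq_swap, h]⟩
        · exact ⟨a, fun ha => hne (ha.trans h.symm), by rw [h]⟩
      · rintro ⟨i, hi, he⟩
        rw [Sym2.eq_iff] at he
        rcases he with ⟨rfl, rfl⟩ | ⟨rfl, rfl⟩
        · exact ⟨hi, Or.inr rfl⟩
        · exact ⟨fun h => hi h.symm, Or.inl rfl⟩
  constructor
  · rw [hE, Set.ncard_image_of_injective _ ?_]
    · have : {i : Fin n | i ≠ last} = {last}ᶜ := by ext i; simp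
      rw [this]
      rw [Set.ncard_eq_toFinset_card']
      simp [Finset.card_compl]
    · intro a b hab
      rw [Sym2.eq_iff] at hab
      rcases hab with ⟨rfl, _⟩ | ⟨rfl, rfl⟩ <;> rfl
  · have : (G'.deleteEdges (G'.incidenceSet last)).edgeSet = ∅ := by
      ext e
      induction e using Sym2.ind with
      | _ a b =>
        simp only [SimpleGraph.mem_edgeSet, SimpleGraph.deleteEdges_adj,
          Set.mem_empty_iff_false, iff_false, not_and, not_not]
        intro hab
        exact ⟨hab, by rcases (hadj a b).1 hab with ⟨_, rfl | rfl⟩ <;> simp [Sym2.mem_iff]⟩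
    rw [this, Set.ncard_empty]
end
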